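/- arXiv:2304.10038 — 5 statements merged into one kernel-verified Lean document; each statement's English description precedes it below -/
import Mathlib

section
/- Let T ≥ 1 and P' : Fin T → (0,1) with P' k0 ≥ e^{-δ_{k0}} for a fixed k0 (where δ_{k0} ≥ 0) and P' k ≤ 1 - e^{-δ_k} for k ≠ k0 (where δ_k ≥ 0). Define Q k = P' k / (∑ j, P' j). Then -log (Q k0) ≤ e^{δ_{k0}} · (∑ k, (1 - e^{-δ_k})). -/
theorem stmt_2 (T : ℕ) (hT : 1 ≤ T) (δ : Fin T → ℝ) (hδ : ∀ k, 0 ≤ δ k)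
    (P' : Fin T → ℝ) (hP' : ∀ k, P' k ∈ Set.Ioo (0:ℝ) 1) (k0 : Fin T)
    (h0 : Real.exp (-δ k0) ≤ P' k0)
    (h1 : ∀ k, k ≠ k0 → P' k ≤ 1 - Real.exp (-δ k)) :
    -Real.log (P' k0 / ∑ j, P' j) ≤ Real.exp (δ k0) * ∑ k, (1 - Real.exp (-δ k)) := by
  have hp0 : 0 < P' k0 := (hP' k0).1
  have hS : 0 < ∑ j, P' j :=
    Finset.sum_pos (fun j _ => (hP' j).1) ⟨k0, Finset.mem_univ k0⟩
  have hlog : -Real.log (P' k0 / ∑ j, P' j) = Real.log ((∑ j, P' j) / P' k0) := by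
    rw [← Real.log_inv]
    congr 1
    field_simp
  have key : Real.log ((∑ j, P' j) / P' k0) ≤ (∑ j, P' j) / P' k0 - 1 :=
    Real.log_le_sub_one_of_pos (div_pos hS hp0)
  have hsub : (∑ j, P' j) / P' k0 - 1 = ((∑ j, P' j) - P' k0) / P' k0 := by
    field_simp
  -- bound the numerator
  have hnum : (∑ j, P' j) - P' k0 ≤ ∑ k, (1 - Real.exp (-δ k)) := by
    have hsplit : (∑ j, P' j) - P' k0 = ∑ j ∈ Finset.univ.erase k0, P' j := by
      rw [← Finset.sum_erase_add Finset.univ P' (Finset.mem_univ k0)]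
      ring
    rw [hsplit]
    calc ∑ j ∈ Finset.univ.erase k0, P' j
        ≤ ∑ j ∈ Finset.univ.erase k0, (1 - Real.exp (-δ j)) := by
          apply Finset.sum_le_sum
          intro j hj
          exact h1 j (Finset.ne_of_mem_erase hj)
      _ ≤ ∑ k, (1 - Real.exp (-δ k)) := by
          apply Finset.sum_le_sum_of_subset_of_nonneg (Finset.erase_subset _ _)
          intro i _ _
          have := Real.exp_le_one_iff.2 (neg_nonpos_of_nonneg (hδ i))
          linarith
  have hnum_nonneg : 0 ≤ (∑ j, P' j) - P' k0 := by
    have : (∑ j, P' j) - P' k0 = ∑ j ∈ Finset.univ.erase k0, P' j := by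
      rw [← Finset.sum_erase_add Finset.univ P' (Finset.mem_univ k0)]
      ring
    rw [this]
    exact Finset.sum_nonneg fun j _ => (hP' j).1.le
  have hinv : 1 / P' k0 ≤ Real.exp (δ k0) := by
    rw [div_le_iff₀ hp0]
    have h := mul_le_mul_of_nonneg_left h0 (Real.exp_pos (δ k0)).le
    rwa [← Real.exp_add, add_neg_cancel, Real.exp_zero] at h
  calc -Real.log (P' k0 / ∑ j, P' j)
      ≤ ((∑ j, P' j) - P' k0) / P' k0 := by rw [hlog, ← hsub]; exact key
    _ = ((∑ j, P' j) - P' k0) * (1 / P' k0) := by ring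
    _ ≤ (∑ k, (1 - Real.exp (-δ k))) * Real.exp (δ k0) := by
        apply mul_le_mul hnum hinv (by positivity) (le_trans hnum_nonneg hnum)
    _ = Real.exp (δ k0) * ∑ k, (1 - Real.exp (-δ k)) := by ring
end

section
/- Let q, r ∈ (0,1] and let δ_1,…,δ_T ≥ 0 be reals indexed by Fin T with a fixed k0. Suppose -log q ≤ ε and r ≥ 1/(1 + e^{δ_{k0}} ∑_k (1 - e^{-δ_k})). Then -log(q·r) ≤ ε + e^{δ_{k0}} ∑_k (1 - e^{-δ_k}). -/
theorem stmt_5 (T : ℕ) (q r ε : ℝ)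
    (hq : q ∈ Set.Ioc (0:ℝ) 1) (hr : r ∈ Set.Ioc (0:ℝ) 1)
    (δ : Fin T → ℝ) (hδ : ∀ k, 0 ≤ δ k) (k0 : Fin T)
    (hqe : -Real.log q ≤ ε)
    (hrb : 1 / (1 + Real.exp (δ k0) * ∑ k, (1 - Real.exp (-δ k))) ≤ r) :
    -Real.log (q * r) ≤ ε + Real.exp (δ k0) * ∑ k, (1 - Real.exp (-δ k)) := by
  set S := Real.exp (δ k0) * ∑ k, (1 - Real.exp (-δ k)) with hS
  have hSnn : 0 ≤ S := by
    apply mul_nonneg (Real.exp_pos _).le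
    apply Finset.sum_nonneg
    intro k _
    have := Real.exp_le_one_iff.mpr (neg_nonpos.mpr (hδ k))
    linarith
  have h1S : (0:ℝ) < 1 + S := by linarith
  have hlogr : -Real.log r ≤ S := by
    have h1 : Real.log (1 / (1 + S)) ≤ Real.log r :=
      Real.log_le_log (by positivity) hrb
    rw [Real.log_div one_ne_zero h1S.ne', Real.log_one] at h1
    have h2 : Real.log (1 + S) ≤ S := by
      have := Real.add_one_le_exp S
      calc Real.log (1 + S) ≤ Real.log (Real.exp S) :=
            Real.log_le_log h1S (by linarith)
        _ = S := Real.log_exp S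
    linarith
  rw [Real.log_mul hq.1.ne' hr.1.ne']
  linarith
end

section
/- Let T ≥ 2, k0 ∈ Fin T, δ : Fin T → ℝ≥0, and P' : Fin T → (0,1) with P' k0 ≥ e^{-δ k0} and P' k ≤ 1 - e^{-δ k} for k ≠ k0. Define Q k0 = P' k0 / (∑_j P' j + ∏_j (1 - P' j)). Then -log (Q k0) ≤ e^{δ k0} · ((1 - e^{-δ k0}) + ∑_k (1 - e^{-δ k})). -/
theorem stmt_8 (T : ℕ) (hT : 2 ≤ T) (k0 : Fin T)
    (δ : Fin T → ℝ) (hδ : ∀ k, 0 ≤ δ k)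
    (P' : Fin T → ℝ) (hP' : ∀ k, P' k ∈ Set.Ioo (0:ℝ) 1)
    (h0 : Real.exp (-δ k0) ≤ P' k0)
    (h1 : ∀ k, k ≠ k0 → P' k ≤ 1 - Real.exp (-δ k)) :
    -Real.log (P' k0 / (∑ j, P' j + ∏ j, (1 - P' j))) ≤
      Real.exp (δ k0) * ((1 - Real.exp (-δ k0)) + ∑ k, (1 - Real.exp (-δ k))) := by
  have hne : Nonempty (Fin T) := ⟨k0⟩
  set D := ∑ j, P' j + ∏ j, (1 - P' j) with hDdef
  set A := 1 - Real.exp (-δ k0) with hA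
  set S := ∑ k, (1 - Real.exp (-δ k)) with hS
  have hterm : ∀ k : Fin T, 0 ≤ 1 - Real.exp (-δ k) := fun k => by
    have : Real.exp (-δ k) ≤ 1 := Real.exp_le_one_iff.mpr (by linarith [hδ k])
    linarith
  have hSnn : 0 ≤ S := Finset.sum_nonneg fun k _ => hterm k
  have hASnn : 0 ≤ A + S := by have := hterm k0; linarith
  have hDpos : 0 < D := by
    apply add_pos
    · exact Finset.sum_pos (fun j _ => (hP' j).1) Finset.univ_nonempty
    · exact Finset.prod_pos (fun j _ => by linarith [(hP' j).2])
  have hsum : ∑ j, P' j ≤ 1 + ∑ j ∈ Finset.univ.erase k0, (1 - Real.exp (-δ j)) := by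
    rw [← Finset.add_sum_erase _ P' (Finset.mem_univ k0)]
    gcongr with j hj
    · exact (hP' k0).2.le
    · exact h1 j (Finset.mem_erase.mp hj).1
  have hprod : ∏ j, (1 - P' j) ≤ A := by
    calc ∏ j, (1 - P' j) = (1 - P' k0) * ∏ j ∈ Finset.univ.erase k0, (1 - P' j) :=
          (Finset.mul_prod_erase _ _ (Finset.mem_univ k0)).symm
      _ ≤ (1 - P' k0) * 1 := by
          gcongr
          · linarith [(hP' k0).2]
          · exact Finset.prod_le_one (fun j _ => by linarith [(hP' j).2])
              (fun j _ => by linarith [(hP' j).1])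
      _ ≤ A := by rw [mul_one]; linarith
  have hSsplit : S = A + ∑ j ∈ Finset.univ.erase k0, (1 - Real.exp (-δ j)) :=
    (Finset.add_sum_erase _ _ (Finset.mem_univ k0)).symm
  have hDle : D ≤ Real.exp (-δ k0) + (A + S) := by
    have h1e : (1:ℝ) = Real.exp (-δ k0) + A := by rw [hA]; ring
    rw [hDdef]
    nlinarith [hsum, hprod, hSsplit]
  have hexp : Real.exp (δ k0) * Real.exp (-δ k0) = 1 := by
    rw [← Real.exp_add]; simp
  have hkey : D * Real.exp (δ k0) ≤ 1 + Real.exp (δ k0) * (A + S) := by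
    nlinarith [Real.exp_pos (δ k0), mul_le_mul_of_nonneg_right hDle (Real.exp_pos (δ k0)).le]
  have hdiv : D / P' k0 ≤ D * Real.exp (δ k0) := by
    rw [div_le_iff₀ (hP' k0).1]
    calc D = D * 1 := (mul_one D).symm
      _ ≤ D * (Real.exp (δ k0) * P' k0) := by
          apply mul_le_mul_of_nonneg_left _ hDpos.le
          calc (1:ℝ) = Real.exp (δ k0) * Real.exp (-δ k0) := hexp.symm
            _ ≤ Real.exp (δ k0) * P' k0 := by
                exact mul_le_mul_of_nonneg_left h0 (Real.exp_pos _).le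
      _ = D * Real.exp (δ k0) * P' k0 := by ring
  have hlog1 : -Real.log (P' k0 / D) = Real.log (D / P' k0) := by
    rw [← Real.log_inv, inv_div]
  rw [hlog1]
  calc Real.log (D / P' k0) ≤ Real.log (D * Real.exp (δ k0)) :=
        Real.log_le_log (div_pos hDpos (hP' k0).1) hdiv
    _ ≤ D * Real.exp (δ k0) - 1 := Real.log_le_sub_one_of_pos (by positivity)
    _ ≤ Real.exp (δ k0) * (A + S) := by linarith
end

section
/- Let T ≥ 1, δ : Fin T → ℝ≥0, and P' : Fin T → (0,1) with P' k ≤ 1 - e^{-δ k} for all k. Define Q+ = (∏_k (1 - P' k)) / (∑_k P' k + ∏_k (1 - P' k)). Then -log Q+ ≤ (∏_k e^{δ k}) · (∑_k (1 - e^{-δ k})). -/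
open Real Finset

lemma neg_log_div_add_le_div {a s : ℝ} (ha : 0 < a) (hs : 0 ≤ s) :
    -log (a / (s + a)) ≤ s / a := by
  have hsa : (s + a) / a = 1 + s / a := by field_simp; ring
  calc -log (a / (s + a)) = log (1 + s / a) := by rw [← log_inv, inv_div, hsa]
    _ ≤ s / a := by linarith [log_le_sub_one_of_pos (by positivity : 0 < 1 + s / a)]

lemma sum_div_prod_one_sub_le {ι : Type*} (s : Finset ι) {x δ : ι → ℝ}
    (hx₀ : ∀ k ∈ s, 0 ≤ x k) (hx : ∀ k ∈ s, x k ≤ 1 - exp (-δ k)) :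
    (∑ k ∈ s, x k) / ∏ k ∈ s, (1 - x k) ≤
      (∏ k ∈ s, exp (δ k)) * ∑ k ∈ s, (1 - exp (-δ k)) := by
  have hsum : 0 ≤ ∑ k ∈ s, (1 - exp (-δ k)) :=
    sum_nonneg fun k hk => (hx₀ k hk).trans (hx k hk)
  calc (∑ k ∈ s, x k) / ∏ k ∈ s, (1 - x k)
      ≤ (∑ k ∈ s, (1 - exp (-δ k))) / ∏ k ∈ s, exp (-δ k) := by
        gcongr with k hk k hk
        · exact hx k hk
        · linarith [hx k hk]
    _ = (∏ k ∈ s, exp (δ k)) * ∑ k ∈ s, (1 - exp (-δ k)) := by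
        simp only [exp_neg, prod_inv_distrib, div_inv_eq_mul, mul_comm]

theorem stmt_9_general (T : ℕ)
    (δ : Fin T → ℝ)
    (P' : Fin T → ℝ) (hP' : ∀ k, P' k ∈ Set.Ioo (0:ℝ) 1)
    (h1 : ∀ k, P' k ≤ 1 - Real.exp (-δ k)) :
    -Real.log ((∏ k, (1 - P' k)) / (∑ k, P' k + ∏ k, (1 - P' k))) ≤
      (∏ k, Real.exp (δ k)) * ∑ k, (1 - Real.exp (-δ k)) := by
  have hprod : 0 < ∏ k, (1 - P' k) := prod_pos fun k _ => sub_pos.2 (hP' k).2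
  have hsum : 0 ≤ ∑ k, P' k := sum_nonneg fun k _ => (hP' k).1.le
  exact (neg_log_div_add_le_div hprod hsum).trans
    (sum_div_prod_one_sub_le _ (fun k _ => (hP' k).1.le) fun k _ => h1 k)

theorem stmt_9 (T : ℕ) (hT : 1 ≤ T)
    (δ : Fin T → ℝ) (hδ : ∀ k, 0 ≤ δ k)
    (P' : Fin T → ℝ) (hP' : ∀ k, P' k ∈ Set.Ioo (0:ℝ) 1)
    (h1 : ∀ k, P' k ≤ 1 - Real.exp (-δ k)) :
    -Real.log ((∏ k, (1 - P' k)) / (∑ k, P' k + ∏ k, (1 - P' k))) ≤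
      (∏ k, Real.exp (δ k)) * ∑ k, (1 - Real.exp (-δ k)) :=
  stmt_9_general T δ P' hP' h1
end

section
/- Let T ≥ 1, k0 ∈ Fin T, τ : Fin T → ℝ>0, δ : Fin T → ℝ≥0, and P' : Fin T → (0,1) with P' k0 ≥ e^{-δ k0} and P' k ≤ 1 - e^{-δ k} for k ≠ k0. Assume (1 - e^{-δ k0})^{1/τ k0} < 1. Define Q k0 = (P' k0)^{1/τ k0} / (∑_j (P' j)^{1/τ j}). Then -log(Q k0) ≤ δ k0 / τ k0 + (∑_k (1 - e^{-δ k})^{1/τ k}) / (1 - (1 - e^{-δ k0})^{1/τ k0}). -/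
theorem stmt_12 (T : ℕ) (hT : 1 ≤ T) (k0 : Fin T)
    (τ : Fin T → ℝ) (hτ : ∀ k, 0 < τ k)
    (δ : Fin T → ℝ) (hδ : ∀ k, 0 ≤ δ k)
    (P' : Fin T → ℝ) (hP' : ∀ k, P' k ∈ Set.Ioo (0:ℝ) 1)
    (h0 : Real.exp (-δ k0) ≤ P' k0)
    (h1 : ∀ k, k ≠ k0 → P' k ≤ 1 - Real.exp (-δ k))
    (hlt : (1 - Real.exp (-δ k0)) ^ (1 / τ k0) < 1) :
    -Real.log ((P' k0) ^ (1 / τ k0) / ∑ j, (P' j) ^ (1 / τ j)) ≤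
      δ k0 / τ k0 +
        (∑ k, (1 - Real.exp (-δ k)) ^ (1 / τ k)) /
          (1 - (1 - Real.exp (-δ k0)) ^ (1 / τ k0)) := by
  have hτ0 := hτ k0
  have he0 : (0:ℝ) < 1 / τ k0 := by positivity
  have hP0 := hP' k0
  have ha_pos : (0:ℝ) < (P' k0) ^ (1 / τ k0) := Real.rpow_pos_of_pos hP0.1 _
  have hS_pos : (0:ℝ) < ∑ j, (P' j) ^ (1 / τ j) :=
    Finset.sum_pos (fun j _ => Real.rpow_pos_of_pos (hP' j).1 _) ⟨k0, Finset.mem_univ k0⟩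
  rw [Real.log_div (ne_of_gt ha_pos) (ne_of_gt hS_pos), neg_sub]
  set c := (1 - Real.exp (-δ k0)) ^ (1 / τ k0) with hc
  set C := ∑ k, (1 - Real.exp (-δ k)) ^ (1 / τ k) with hC
  have hterm_nonneg : ∀ k, (0:ℝ) ≤ (1 - Real.exp (-δ k)) ^ (1 / τ k) := by
    intro k
    apply Real.rpow_nonneg
    have : Real.exp (-δ k) ≤ 1 := by
      rw [Real.exp_le_one_iff]; linarith [hδ k]
    linarith
  have hc_nonneg : (0:ℝ) ≤ c := hterm_nonneg k0
  have hcC : c ≤ C := Finset.single_le_sum (fun k _ => hterm_nonneg k) (Finset.mem_univ k0)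
  have hC_nonneg : (0:ℝ) ≤ C := le_trans hc_nonneg hcC
  -- log a ≥ -(δ k0 / τ k0)
  have hloga : -(δ k0 / τ k0) ≤ Real.log ((P' k0) ^ (1 / τ k0)) := by
    have h2 : Real.exp (-δ k0) ^ (1 / τ k0) ≤ (P' k0) ^ (1 / τ k0) :=
      Real.rpow_le_rpow (le_of_lt (Real.exp_pos _)) h0 (le_of_lt he0)
    have h3 : Real.exp (-δ k0) ^ (1 / τ k0) = Real.exp (-(δ k0 / τ k0)) := by
      rw [← Real.exp_mul]; ring_nf
    have := Real.log_le_log (by positivity) h2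
    rwa [h3, Real.log_exp] at this
  -- log S ≤ C - c
  have hlogS : Real.log (∑ j, (P' j) ^ (1 / τ j)) ≤ C - c := by
    have hSle : (∑ j, (P' j) ^ (1 / τ j)) ≤ 1 + (C - c) := by
      rw [← Finset.add_sum_erase _ _ (Finset.mem_univ k0), hC,
        ← Finset.add_sum_erase _ (fun k => (1 - Real.exp (-δ k)) ^ (1 / τ k)) (Finset.mem_univ k0)]
      have ha1 : (P' k0) ^ (1 / τ k0) ≤ 1 :=
        Real.rpow_le_one (le_of_lt hP0.1) (le_of_lt hP0.2) (le_of_lt he0)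
      have hsum : ∑ k ∈ Finset.univ.erase k0, (P' k) ^ (1 / τ k) ≤
          ∑ k ∈ Finset.univ.erase k0, (1 - Real.exp (-δ k)) ^ (1 / τ k) := by
        apply Finset.sum_le_sum
        intro k hk
        exact Real.rpow_le_rpow (le_of_lt (hP' k).1) (h1 k (Finset.ne_of_mem_erase hk))
          (le_of_lt (one_div_pos.mpr (hτ k)))
      have : c + ∑ k ∈ Finset.univ.erase k0, (1 - Real.exp (-δ k)) ^ (1 / τ k)
          - c = ∑ k ∈ Finset.univ.erase k0, (1 - Real.exp (-δ k)) ^ (1 / τ k) := by ring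
      linarith
    calc Real.log (∑ j, (P' j) ^ (1 / τ j)) ≤ Real.log (1 + (C - c)) :=
          Real.log_le_log hS_pos hSle
      _ ≤ (1 + (C - c)) - 1 := Real.log_le_sub_one_of_pos (by linarith)
      _ = C - c := by ring
  have hfinal : C - c ≤ C / (1 - c) := by
    rw [le_div_iff₀ (by linarith : (0:ℝ) < 1 - c)]
    nlinarith
  linarith
end
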